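/- arXiv:2404.16058 — 3 statements merged into one kernel-verified Lean document; each statement's English description precedes it below -/
import Mathlib

section
/- Let X be a reflexive real Banach space, D ⊆ X convex and closed, φ : X → ℝ locally Lipschitz, and x₀ ∈ ∂D. Suppose (I − ∇φ)(x₀) ⊆ D, i.e., for every x* ∈ ∂φ(x₀) and every y ∈ 𝓕(x*) one has x₀ − y ∈ D, where 𝓕 is the duality map. Then ∂φ is outwardly directed at x₀: ∂φ(x₀) ∩ (−∂δ_D(x₀)) ⊆ {0}. -/
open Filter Set

variable {X : Type*} [NormedAddCommGroup X] [NormedSpace ℝ X] [CompleteSpace X]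

/-- The Clarke generalized directional derivative of `φ` at `x` in direction `h`. -/
noncomputable def clarkeDeriv (φ : X → ℝ) (x h : X) : ℝ :=
  Filter.limsup (fun p : X × ℝ => (φ (p.1 + p.2 • h) - φ p.1) / p.2)
    ((nhds x) ×ˢ (nhdsWithin 0 (Set.Ioi (0 : ℝ))))

/-- The Clarke subdifferential of `φ` at `x`. -/
def clarkeSubdiff (φ : X → ℝ) (x : X) : Set (X →L[ℝ] ℝ) :=
  {xs | ∀ h : X, xs h ≤ clarkeDeriv φ x h}

/-- The duality map `𝓕 : X* → 2^X` on a reflexive space: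
`𝓕(x*) = {x : ⟨x*, x⟩ = ‖x*‖² = ‖x‖²}`. -/
def dualityMap (xs : X →L[ℝ] ℝ) : Set X :=
  {x : X | xs x = ‖xs‖ ^ 2 ∧ ‖xs‖ ^ 2 = ‖x‖ ^ 2}
/-! By reflexivity every functional attains its norm on the unit sphere, so the duality map has
nonempty values. For `y ∈ 𝓕(z*)` the invariance hypothesis puts `x₀ - y` in `D`, and testing the
normal-cone condition there gives `0 ≤ ⟨z*, -y⟩ = -‖z*‖²`. -/

section Duality

variable {E : Type*} [NormedAddCommGroup E] [NormedSpace ℝ E]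

open NormedSpace in
theorem exists_norm_eq_one_apply_eq_norm_of_surjective_inclusionInDoubleDual
    (hrefl : Function.Surjective (inclusionInDoubleDual ℝ E)) {f : StrongDual ℝ E} (hf : f ≠ 0) :
    ∃ u : E, ‖u‖ = 1 ∧ f u = ‖f‖ := by
  obtain ⟨F, hF, hFf⟩ := exists_dual_vector ℝ f (norm_ne_zero_iff.mpr hf)
  obtain ⟨u, rfl⟩ := hrefl F
  refine ⟨u, ?_, by simpa using hFf⟩
  exact ((inclusionInDoubleDualLi ℝ).norm_map u).symm.trans hF

theorem norm_smul_mem_dualityMap {f : StrongDual ℝ E} {u : E} (hu : ‖u‖ = 1) (hfu : f u = ‖f‖) :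
    ‖f‖ • u ∈ dualityMap f :=
  ⟨by simp [hfu, sq], by simp [norm_smul, hu]⟩

theorem dualityMap_nonempty_of_surjective_inclusionInDoubleDual
    (hrefl : Function.Surjective (NormedSpace.inclusionInDoubleDual ℝ E)) (f : StrongDual ℝ E) :
    (dualityMap f).Nonempty := by
  rcases eq_or_ne f 0 with rfl | hf
  · exact ⟨0, by simp [dualityMap]⟩
  · obtain ⟨u, hu, hfu⟩ :=
      exists_norm_eq_one_apply_eq_norm_of_surjective_inclusionInDoubleDual hrefl hf
    exact ⟨_, norm_smul_mem_dualityMap hu hfu⟩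

theorem eq_zero_of_mem_dualityMap_of_apply_nonpos {f : StrongDual ℝ E} {y : E}
    (hy : y ∈ dualityMap f) (hfy : f y ≤ 0) : f = 0 := by
  simpa [hy.1] using hfy

end Duality

theorem outwardly_directed_of_schauder_invariance_general
    (hrefl : Function.Surjective (NormedSpace.inclusionInDoubleDual ℝ X))
    (D : Set X)
    (φ : X → ℝ)
    {x₀ : X}
    (hinv : ∀ xs ∈ clarkeSubdiff φ x₀, ∀ y ∈ dualityMap xs, x₀ - y ∈ D) :
    ∀ zs ∈ clarkeSubdiff φ x₀, (∀ z ∈ D, 0 ≤ zs (z - x₀)) → zs = 0 := by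
  intro zs hzs hnormal
  obtain ⟨y, hy⟩ := dualityMap_nonempty_of_surjective_inclusionInDoubleDual hrefl zs
  refine eq_zero_of_mem_dualityMap_of_apply_nonpos hy ?_
  simpa using hnormal _ (hinv zs hzs y hy)

theorem outwardly_directed_of_schauder_invariance
    (hrefl : Function.Surjective (NormedSpace.inclusionInDoubleDual ℝ X))
    (D : Set X) (hDconv : Convex ℝ D) (hDcl : IsClosed D)
    (φ : X → ℝ) (hφ : LocallyLipschitz φ)
    {x₀ : X} (hx₀ : x₀ ∈ frontier D)
    (hinv : ∀ xs ∈ clarkeSubdiff φ x₀, ∀ y ∈ dualityMap xs, x₀ - y ∈ D) :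
    ∀ zs ∈ clarkeSubdiff φ x₀, (∀ z ∈ D, 0 ≤ zs (z - x₀)) → zs = 0 :=
  outwardly_directed_of_schauder_invariance_general hrefl D φ hinv
end

section
/- (Von Neumann minimax / saddle point theorem) Let X, Y be Hausdorff topological vector spaces, C ⊆ X and D ⊆ Y convex compact sets, and ψ : C × D → ℝ such that x ↦ ψ(x, y) is upper semicontinuous and concave for each y ∈ D, and y ↦ ψ(x, y) is lower semicontinuous and convex for each x ∈ C. Then ψ has a saddle point (x̄, ȳ) ∈ C × D: ψ(x, ȳ) ≤ ψ(x̄, ȳ) ≤ ψ(x̄, y) for all (x, y) ∈ C × D. -/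
theorem vonNeumann_saddle_point_general
    {X Y : Type*} [AddCommGroup X] [Module ℝ X] [TopologicalSpace X]
    [IsTopologicalAddGroup X] [ContinuousSMul ℝ X]
    [AddCommGroup Y] [Module ℝ Y] [TopologicalSpace Y]
    [IsTopologicalAddGroup Y] [ContinuousSMul ℝ Y]
    (C : Set X) (D : Set Y) (hCne : C.Nonempty) (hDne : D.Nonempty)
    (hCconv : Convex ℝ C) (hCcomp : IsCompact C)
    (hDconv : Convex ℝ D) (hDcomp : IsCompact D)
    (ψ : X → Y → ℝ)
    (husc : ∀ y ∈ D, UpperSemicontinuousOn (fun x => ψ x y) C)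
    (hconc : ∀ y ∈ D, ConcaveOn ℝ C (fun x => ψ x y))
    (hlsc : ∀ x ∈ C, LowerSemicontinuousOn (fun y => ψ x y) D)
    (hconv : ∀ x ∈ C, ConvexOn ℝ D (fun y => ψ x y)) :
    ∃ xb ∈ C, ∃ yb ∈ D, ∀ x ∈ C, ∀ y ∈ D, ψ x yb ≤ ψ xb yb ∧ ψ xb yb ≤ ψ xb y := by
  -- Sion's theorem minimizes over its first variable, hence the swap of arguments.
  obtain ⟨yb, hyb, xb, hxb, hsaddle⟩ :=
    Sion.exists_isSaddlePointOn (f := fun y x => ψ x y) hDne hDconv hDcomp hlsc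
      (fun x hx => (hconv x hx).quasiconvexOn) hCconv hCne hCcomp husc
      (fun y hy => (hconc y hy).quasiconcaveOn)
  exact ⟨xb, hxb, yb, hyb, fun x hx y hy => ⟨hsaddle yb hyb x hx, hsaddle y hy xb hxb⟩⟩

/-- Von Neumann minimax / saddle point theorem. -/
theorem vonNeumann_saddle_point
    {X Y : Type*} [AddCommGroup X] [Module ℝ X] [TopologicalSpace X]
    [IsTopologicalAddGroup X] [ContinuousSMul ℝ X] [T2Space X]
    [AddCommGroup Y] [Module ℝ Y] [TopologicalSpace Y]
    [IsTopologicalAddGroup Y] [ContinuousSMul ℝ Y] [T2Space Y]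
    (C : Set X) (D : Set Y) (hCne : C.Nonempty) (hDne : D.Nonempty)
    (hCconv : Convex ℝ C) (hCcomp : IsCompact C)
    (hDconv : Convex ℝ D) (hDcomp : IsCompact D)
    (ψ : X → Y → ℝ)
    (husc : ∀ y ∈ D, UpperSemicontinuousOn (fun x => ψ x y) C)
    (hconc : ∀ y ∈ D, ConcaveOn ℝ C (fun x => ψ x y))
    (hlsc : ∀ x ∈ C, LowerSemicontinuousOn (fun y => ψ x y) D)
    (hconv : ∀ x ∈ C, ConvexOn ℝ D (fun y => ψ x y)) :
    ∃ xb ∈ C, ∃ yb ∈ D, ∀ x ∈ C, ∀ y ∈ D, ψ x yb ≤ ψ xb yb ∧ ψ xb yb ≤ ψ xb y :=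
  vonNeumann_saddle_point_general C D hCne hDne hCconv hCcomp hDconv hDcomp ψ husc hconc hlsc hconv
end

section
/- Let X be a Banach space, J : X → ℝ locally Lipschitz, and let σ(·, u₀) solve σ' = −V(σ) with V(u) = ρ(u)ψ(u)v(u), where ρ, ψ : X → [0,1] are locally Lipschitz and v satisfies ⟨x*, v(x)⟩ ≥ b/8 for all x* ∈ ∂J(x) whenever x is in a region R, while V = 0 outside a larger region. Then t ↦ J(σ(t, u₀)) is non-increasing, and if σ(s, u₀) ∈ R with ρ(σ(s,u₀)) = ψ(σ(s,u₀)) = 1 for all s ∈ [t₁, t₂], then J(σ(t₁, u₀)) − J(σ(t₂, u₀)) ≥ (b/8)(t₂ − t₁). -/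
open Filter Set

variable {X : Type*} [NormedAddCommGroup X] [NormedSpace ℝ X] [CompleteSpace X]

/-!
The Clarke derivative `J°(x; ·)` of a locally Lipschitz function is finite, subadditive and
positively homogeneous, so by Hahn–Banach it is the support function of the Clarke
subdifferential: `J°(x; w) = max {⟨x*, w⟩ : x* ∈ ∂J(x)}`. Along a differentiable curve `σ` the
right Dini derivatives of `J ∘ σ` at `t` are at most `J°(σ t; σ' t)`; for the flow
`σ' = -ρψ v` this is `-ρψ · min {⟨x*, v⟩ : x* ∈ ∂J(σ t)}`, which is `≤ 0` everywhere and
`≤ -b/8` while `σ` stays in `R` with `ρ = ψ = 1`. A continuous function whose right Dini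
derivatives are bounded by `C` grows at most like `C t`.
-/

open Topology

theorem exists_linearMap_le_sublinear_apply_eq {V : Type*} [AddCommGroup V] [Module ℝ V]
    (N : V → ℝ) (N_hom : ∀ c : ℝ, 0 < c → ∀ x, N (c • x) = c * N x)
    (N_add : ∀ x y, N (x + y) ≤ N x + N y) (w : V) :
    ∃ g : V →ₗ[ℝ] ℝ, (∀ x, g x ≤ N x) ∧ g w = N w := by
  have N_zero : N 0 = 0 := by
    have := N_hom 2 two_pos 0
    rw [smul_zero] at this
    linarith
  have le_N_smul : ∀ c : ℝ, c * N w ≤ N (c • w) := by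
    intro c
    rcases lt_trichotomy c 0 with hc | rfl | hc
    · have := N_add (c • w) ((-c) • w)
      rw [← add_smul, add_neg_cancel, zero_smul, N_zero, N_hom (-c) (neg_pos.2 hc)] at this
      linarith
    · simp [N_zero]
    · rw [N_hom c hc]
  let f := LinearPMap.mkSpanSingleton' (σ := RingHom.id ℝ) w (N w) fun c hc => by
    have h₁ := le_N_smul c
    have h₂ := le_N_smul (-c)
    rw [hc, N_zero] at h₁
    rw [neg_smul, hc, neg_zero, N_zero] at h₂
    simp only [RingHom.id_apply, smul_eq_mul]
    linarith
  obtain ⟨g, hgf, hgN⟩ := exists_extension_of_le_sublinear f N N_hom N_add <| by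
    rintro ⟨_, hz⟩
    obtain ⟨c, rfl⟩ := Submodule.mem_span_singleton.1 hz
    rw [LinearPMap.mkSpanSingleton'_apply]
    exact le_N_smul c
  exact ⟨g, hgN, (hgf ⟨w, Submodule.mem_span_singleton_self w⟩).trans
    (LinearPMap.mkSpanSingleton'_apply_self _ _ _ _)⟩

section Clarke

abbrev clarkeFilter {E : Type*} [TopologicalSpace E] (x : E) : Filter (E × ℝ) := 𝓝 x ×ˢ 𝓝[>] 0

theorem tendsto_snd_clarkeFilter {E : Type*} [TopologicalSpace E] (x : E) :
    Tendsto Prod.snd (clarkeFilter x) (𝓝 0) :=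
  tendsto_snd.mono_right nhdsWithin_le_nhds

theorem tendsto_rescale_clarkeFilter {E : Type*} [TopologicalSpace E] (x : E) {c : ℝ}
    (hc : 0 < c) :
    Tendsto (fun p : E × ℝ => (p.1, c * p.2)) (clarkeFilter x) (clarkeFilter x) := by
  refine tendsto_fst.prodMk (tendsto_nhdsWithin_of_tendsto_nhds_of_eventually_within _ ?_ ?_)
  · simpa using (tendsto_snd_clarkeFilter x).const_mul c
  · exact (tendsto_snd.eventually self_mem_nhdsWithin).mono fun p hp => mul_pos hc hp

variable {E : Type*} [NormedAddCommGroup E] [NormedSpace ℝ E] {φ : E → ℝ}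

noncomputable def clarkeQuotient (φ : E → ℝ) (h : E) (p : E × ℝ) : ℝ :=
  (φ (p.1 + p.2 • h) - φ p.1) / p.2

theorem clarkeDeriv_eq_limsup (φ : E → ℝ) (x h : E) :
    clarkeDeriv φ x h = limsup (clarkeQuotient φ h) (clarkeFilter x) := rfl

theorem clarkeDeriv_zero (φ : E → ℝ) (x : E) : clarkeDeriv φ x 0 = 0 := by
  have : clarkeQuotient φ 0 = fun _ => 0 := by
    ext p
    simp [clarkeQuotient]
  rw [clarkeDeriv_eq_limsup, this, limsup_const]

theorem tendsto_add_smul_clarkeFilter (x h : E) :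
    Tendsto (fun p : E × ℝ => p.1 + p.2 • h) (clarkeFilter x) (𝓝 x) := by
  simpa using tendsto_fst.add ((tendsto_snd_clarkeFilter x).smul_const h)

theorem tendsto_translate_clarkeFilter (x h : E) :
    Tendsto (fun p : E × ℝ => (p.1 + p.2 • h, p.2)) (clarkeFilter x) (clarkeFilter x) :=
  (tendsto_add_smul_clarkeFilter x h).prodMk tendsto_snd

namespace LocallyLipschitz

theorem exists_eventually_abs_clarkeQuotient_le (hφ : LocallyLipschitz φ) (x : E) :
    ∃ K : ℝ, ∀ h, ∀ᶠ p in clarkeFilter x, |clarkeQuotient φ h p| ≤ K * ‖h‖ := by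
  obtain ⟨K, s, hs, hK⟩ := hφ x
  refine ⟨K, fun h => ?_⟩
  filter_upwards [tendsto_fst (f := 𝓝 x) (g := 𝓝[>] (0 : ℝ)) hs,
    tendsto_add_smul_clarkeFilter x h hs, tendsto_snd self_mem_nhdsWithin] with p hp hph (hp₀ : 0 < p.2)
  have hdist := hK.dist_le_mul _ hph _ hp
  rw [Real.dist_eq, dist_eq_norm, add_sub_cancel_left, norm_smul, Real.norm_of_nonneg hp₀.le]
    at hdist
  rw [clarkeQuotient, abs_div, abs_of_pos hp₀, div_le_iff₀ hp₀]
  linarith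

theorem isBoundedUnder_clarkeQuotient_comp (hφ : LocallyLipschitz φ) {x : E}
    {m : E × ℝ → E × ℝ} (hm : Tendsto m (clarkeFilter x) (clarkeFilter x)) (h : E) :
    IsBoundedUnder (· ≤ ·) (clarkeFilter x) (clarkeQuotient φ h ∘ m) ∧
      IsBoundedUnder (· ≥ ·) (clarkeFilter x) (clarkeQuotient φ h ∘ m) := by
  obtain ⟨K, hK⟩ := hφ.exists_eventually_abs_clarkeQuotient_le x
  have hKm := hm.eventually (hK h)
  exact ⟨isBoundedUnder_of_eventually_le (hKm.mono fun p hp => (abs_le.1 hp).2),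
    isBoundedUnder_of_eventually_ge (hKm.mono fun p hp => (abs_le.1 hp).1)⟩

theorem exists_abs_clarkeDeriv_le (hφ : LocallyLipschitz φ) (x : E) :
    ∃ K : ℝ, ∀ h, |clarkeDeriv φ x h| ≤ K * ‖h‖ := by
  obtain ⟨K, hK⟩ := hφ.exists_eventually_abs_clarkeQuotient_le x
  refine ⟨K, fun h => abs_le.2 ⟨?_, ?_⟩⟩
  · exact le_limsup_of_frequently_le ((hK h).mono fun p hp => (abs_le.1 hp).1).frequently
      (hφ.isBoundedUnder_clarkeQuotient_comp tendsto_id h).1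
  · exact limsup_le_of_le (hφ.isBoundedUnder_clarkeQuotient_comp tendsto_id h).2.isCoboundedUnder_le
      ((hK h).mono fun p hp => (abs_le.1 hp).2)

theorem clarkeDeriv_add_le (hφ : LocallyLipschitz φ) (x h₁ h₂ : E) :
    clarkeDeriv φ x (h₁ + h₂) ≤ clarkeDeriv φ x h₁ + clarkeDeriv φ x h₂ := by
  set m := fun p : E × ℝ => (p.1 + p.2 • h₁, p.2)
  have hm : Tendsto m (clarkeFilter x) (clarkeFilter x) := tendsto_translate_clarkeFilter x h₁
  have hsplit : clarkeQuotient φ (h₁ + h₂) = clarkeQuotient φ h₂ ∘ m + clarkeQuotient φ h₁ := by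
    ext p
    simp only [clarkeQuotient, m, Function.comp, Pi.add_apply]
    rw [← add_div, smul_add, ← add_assoc, sub_add_sub_cancel]
  obtain ⟨hm₂, hm₂'⟩ := hφ.isBoundedUnder_clarkeQuotient_comp hm h₂
  obtain ⟨hb₁, hb₁'⟩ := hφ.isBoundedUnder_clarkeQuotient_comp tendsto_id h₁
  obtain ⟨hb₂, -⟩ := hφ.isBoundedUnder_clarkeQuotient_comp tendsto_id h₂
  rw [clarkeDeriv_eq_limsup, hsplit, add_comm (clarkeDeriv φ x h₁)]
  calc _ ≤ limsup (clarkeQuotient φ h₂ ∘ m) _ + limsup (clarkeQuotient φ h₁) _ :=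
        limsup_add_le hm₂' hm₂ hb₁'.isCoboundedUnder_le hb₁
    _ ≤ clarkeDeriv φ x h₂ + clarkeDeriv φ x h₁ :=
        add_le_add (hm.limsup_comp_le_limsup hm₂'.isCoboundedUnder_le hb₂) le_rfl

theorem clarkeDeriv_smul_le (hφ : LocallyLipschitz φ) (x h : E) {c : ℝ} (hc : 0 < c) :
    clarkeDeriv φ x (c • h) ≤ c * clarkeDeriv φ x h := by
  set n := fun p : E × ℝ => (p.1, c * p.2)
  have hn : Tendsto n (clarkeFilter x) (clarkeFilter x) := tendsto_rescale_clarkeFilter x hc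
  have hsplit : clarkeQuotient φ (c • h) = (c * ·) ∘ (clarkeQuotient φ h ∘ n) := by
    ext p
    simp only [clarkeQuotient, n, Function.comp, smul_smul]
    rw [mul_comm p.2 c, ← mul_div_assoc, mul_div_mul_left _ _ hc.ne']
  obtain ⟨hn₁, hn₁'⟩ := hφ.isBoundedUnder_clarkeQuotient_comp hn h
  obtain ⟨hb, -⟩ := hφ.isBoundedUnder_clarkeQuotient_comp tendsto_id h
  rw [clarkeDeriv_eq_limsup, hsplit, ← Monotone.map_limsup_of_continuousAt
    (monotone_mul_left_of_nonneg hc.le) _ (continuous_const_mul c).continuousAt hn₁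
    hn₁'.isCoboundedUnder_le]
  exact mul_le_mul_of_nonneg_left (hn.limsup_comp_le_limsup hn₁'.isCoboundedUnder_le hb) hc.le

theorem clarkeDeriv_smul (hφ : LocallyLipschitz φ) (x h : E) {c : ℝ} (hc : 0 < c) :
    clarkeDeriv φ x (c • h) = c * clarkeDeriv φ x h := by
  refine (hφ.clarkeDeriv_smul_le x h hc).antisymm ?_
  have := hφ.clarkeDeriv_smul_le x (c • h) (inv_pos.2 hc)
  rwa [inv_smul_smul₀ hc.ne', le_inv_mul_iff₀ hc] at this

theorem exists_mem_clarkeSubdiff_apply_eq (hφ : LocallyLipschitz φ) (x w : E) :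
    ∃ g ∈ clarkeSubdiff φ x, g w = clarkeDeriv φ x w := by
  obtain ⟨K, hK⟩ := hφ.exists_abs_clarkeDeriv_le x
  obtain ⟨g, hgN, hgw⟩ := exists_linearMap_le_sublinear_apply_eq (clarkeDeriv φ x)
    (fun _ hc h => hφ.clarkeDeriv_smul x h hc) (hφ.clarkeDeriv_add_le x) w
  have hbound : ∀ a, ‖g a‖ ≤ K * ‖a‖ := fun a => by
    have hneg := hgN (-a)
    have hKneg := (abs_le.1 (hK (-a))).2
    rw [map_neg] at hneg
    rw [norm_neg] at hKneg
    exact abs_le.2 ⟨by linarith, (hgN a).trans (abs_le.1 (hK a)).2⟩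
  exact ⟨g.mkContinuous K hbound, hgN, hgw⟩

theorem clarkeDeriv_neg_smul_le (hφ : LocallyLipschitz φ) {x u : E} {c m : ℝ} (hc : 0 ≤ c)
    (hm : ∀ g ∈ clarkeSubdiff φ x, m ≤ g u) : clarkeDeriv φ x (-(c • u)) ≤ -(c * m) := by
  rcases hc.eq_or_lt with rfl | hc
  · simp [clarkeDeriv_zero]
  obtain ⟨g, hg, hgu⟩ := hφ.exists_mem_clarkeSubdiff_apply_eq x (-u)
  rw [← smul_neg, hφ.clarkeDeriv_smul x _ hc, ← hgu, map_neg, mul_neg, neg_le_neg_iff]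
  exact mul_le_mul_of_nonneg_left (hm g hg) hc.le

theorem eventually_slope_comp_lt (hφ : LocallyLipschitz φ) {γ : ℝ → E} {w : E} {t r : ℝ}
    (hγ : HasDerivAt γ w t) (hr : clarkeDeriv φ (γ t) w < r) :
    ∀ᶠ z in 𝓝[>] t, slope (φ ∘ γ) t z < r := by
  set x := γ t
  obtain ⟨r', hr', hr'r⟩ := exists_between hr
  obtain ⟨K, s, hs, hK⟩ := hφ x
  obtain ⟨δ, hδ, hKδ⟩ := exists_pos_mul_lt (sub_pos.2 hr'r) (K : ℝ)
  -- The slope splits into a Clarke difference quotient at `(x, z - t)`, eventually `< r'`, and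
  -- a Lipschitz error term `≤ K δ`, since `γ z = x + (z - t) • w + o(z - t)`.
  have hτ : Tendsto (fun z => (x, z - t)) (𝓝[>] t) (clarkeFilter x) := by
    refine tendsto_const_nhds.prodMk (tendsto_nhdsWithin_of_tendsto_nhds_of_eventually_within _
      ?_ (eventually_mem_nhdsWithin.mono fun z hz => mem_Ioi.2 (sub_pos.2 hz)))
    simpa using (tendsto_id.sub_const t).mono_left (nhdsWithin_le_nhds (a := t))
  have hline : Tendsto (fun z => x + (z - t) • w) (𝓝[>] t) (𝓝 x) :=
    (tendsto_add_smul_clarkeFilter x w).comp hτ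
  have hquot : ∀ᶠ p in clarkeFilter x, clarkeQuotient φ w p < r' :=
    eventually_lt_of_limsup_lt hr' (hφ.isBoundedUnder_clarkeQuotient_comp tendsto_id w).1
  filter_upwards [hτ.eventually hquot, hline hs,
    (hγ.continuousAt.mono_left nhdsWithin_le_nhds) hs,
    (hγ.isLittleO.def hδ).filter_mono nhdsWithin_le_nhds, self_mem_nhdsWithin]
    with z hzq hzl hzs hzo (hz : t < z)
  have hzt : 0 < z - t := sub_pos.2 hz
  have hclose : ‖γ z - (x + (z - t) • w)‖ ≤ δ * (z - t) := by
    rw [sub_add_eq_sub_sub]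
    exact hzo.trans_eq (by rw [Real.norm_of_nonneg hzt.le])
  have hlip : φ (γ z) - φ (x + (z - t) • w) ≤ K * δ * (z - t) := by
    have hdist := hK.dist_le_mul _ hzs _ hzl
    rw [Real.dist_eq, dist_eq_norm] at hdist
    calc φ (γ z) - φ (x + (z - t) • w) ≤ K * ‖γ z - (x + (z - t) • w)‖ :=
          (le_abs_self _).trans hdist
      _ ≤ K * (δ * (z - t)) := mul_le_mul_of_nonneg_left hclose K.coe_nonneg
      _ = K * δ * (z - t) := by ring
  have hsplit : slope (φ ∘ γ) t z =
      (φ (γ z) - φ (x + (z - t) • w)) / (z - t) + clarkeQuotient φ w (x, z - t) := by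
    rw [slope_def_field, clarkeQuotient, ← add_div, sub_add_sub_cancel]
    rfl
  rw [hsplit]
  have := (div_le_iff₀ hzt).2 hlip
  linarith

theorem sub_le_mul_of_clarkeDeriv_le (hφ : LocallyLipschitz φ) {γ γ' : ℝ → E} {a b C : ℝ}
    (hab : a ≤ b) (hγc : ContinuousOn γ (Icc a b)) (hγ : ∀ t ∈ Ico a b, HasDerivAt γ (γ' t) t)
    (hC : ∀ t ∈ Ico a b, clarkeDeriv φ (γ t) (γ' t) ≤ C) :
    φ (γ b) - φ (γ a) ≤ C * (b - a) := by
  have hB : ∀ t, HasDerivWithinAt (fun s => φ (γ a) + C * (s - a)) C (Ici t) t := fun t => by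
    simpa using (((hasDerivWithinAt_id t (Ici t)).sub_const a).const_mul C).const_add (φ (γ a))
  have := image_le_of_liminf_slope_right_le_deriv_boundary (f := φ ∘ γ)
    (hφ.continuous.comp_continuousOn hγc) (by simp) (by fun_prop) (fun t _ => hB t)
    (fun t ht r hr => (hφ.eventually_slope_comp_lt (hγ t ht) ((hC t ht).trans_lt hr)).frequently)
    (right_mem_Icc.2 hab)
  simp only [Function.comp_apply] at this
  linarith

end LocallyLipschitz

end Clarke

theorem energy_decay_along_flow_general (J : X → ℝ) (hJ : LocallyLipschitz J)
    (ρ ψ : X → ℝ) (hρ : ∀ x, ρ x ∈ Set.Icc (0 : ℝ) 1) (hψ : ∀ x, ψ x ∈ Set.Icc (0 : ℝ) 1)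
    (v : X → X) (b : ℝ)
    (R R' : Set X)
    (hv : ∀ x ∈ R, ∀ xs ∈ clarkeSubdiff J x, b / 8 ≤ xs (v x))
    (hpos : ∀ x ∈ R', ∀ xs ∈ clarkeSubdiff J x, 0 ≤ xs (v x))
    (hout : ∀ x ∉ R', ρ x * ψ x = 0)
    (σ : ℝ → X)
    (hσ : ∀ t : ℝ, HasDerivAt σ (-((ρ (σ t) * ψ (σ t)) • v (σ t))) t) :
    Antitone (fun t => J (σ t)) ∧
      ∀ t₁ t₂ : ℝ, t₁ ≤ t₂ →
        (∀ s ∈ Set.Icc t₁ t₂, σ s ∈ R ∧ ρ (σ s) = 1 ∧ ψ (σ s) = 1) →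
        (b / 8) * (t₂ - t₁) ≤ J (σ t₁) - J (σ t₂) := by
  have hσc : Continuous σ := continuous_iff_continuousAt.2 fun t => (hσ t).continuousAt
  have decay : ∀ t, clarkeDeriv J (σ t) (-((ρ (σ t) * ψ (σ t)) • v (σ t))) ≤ 0 := fun t => by
    by_cases hR' : σ t ∈ R'
    · simpa using hJ.clarkeDeriv_neg_smul_le (mul_nonneg (hρ _).1 (hψ _).1) (hpos _ hR')
    · simp [hout _ hR', clarkeDeriv_zero]
  refine ⟨fun t₁ t₂ h => ?_, fun t₁ t₂ h hR => ?_⟩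
  · have := hJ.sub_le_mul_of_clarkeDeriv_le h hσc.continuousOn (fun t _ => hσ t)
      fun t _ => decay t
    linarith
  · have := hJ.sub_le_mul_of_clarkeDeriv_le h hσc.continuousOn (fun t _ => hσ t) fun t ht => by
      obtain ⟨hRt, hρ₁, hψ₁⟩ := hR t (Ico_subset_Icc_self ht)
      simpa [hρ₁, hψ₁] using hJ.clarkeDeriv_neg_smul_le zero_le_one (hv _ hRt)
    linarith

theorem energy_decay_along_flow (J : X → ℝ) (hJ : LocallyLipschitz J)
    (ρ ψ : X → ℝ) (hρ : ∀ x, ρ x ∈ Set.Icc (0 : ℝ) 1) (hψ : ∀ x, ψ x ∈ Set.Icc (0 : ℝ) 1)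
    (hρlip : LocallyLipschitz ρ) (hψlip : LocallyLipschitz ψ)
    (v : X → X) (b : ℝ) (hb : 0 < b)
    (R R' : Set X) (hRR' : R ⊆ R')
    (hv : ∀ x ∈ R, ∀ xs ∈ clarkeSubdiff J x, b / 8 ≤ xs (v x))
    (hpos : ∀ x ∈ R', ∀ xs ∈ clarkeSubdiff J x, 0 ≤ xs (v x))
    (hout : ∀ x ∉ R', ρ x * ψ x = 0)
    (σ : ℝ → X)
    (hσ : ∀ t : ℝ, HasDerivAt σ (-((ρ (σ t) * ψ (σ t)) • v (σ t))) t) :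
    Antitone (fun t => J (σ t)) ∧
      ∀ t₁ t₂ : ℝ, t₁ ≤ t₂ →
        (∀ s ∈ Set.Icc t₁ t₂, σ s ∈ R ∧ ρ (σ s) = 1 ∧ ψ (σ s) = 1) →
        (b / 8) * (t₂ - t₁) ≤ J (σ t₁) - J (σ t₂) :=
  energy_decay_along_flow_general J hJ ρ ψ hρ hψ v b R R' hv hpos hout σ hσ
end
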